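/- arXiv:0809.1691 — 7 statements merged into one kernel-verified Lean document; each statement's English description precedes it below -/
import Mathlib

section
/- The sequence (λ_A(1), λ_A(2), λ_A(3), ...) is not eventually periodic. -/
/-!
Eventual periodicity with period `k` transfers, after cancelling the unit `f k` from
`f (k * n + k) = f (k * n)`, to eventual periodicity with period `1`, i.e. `f` is eventually
constant. But for `p ∈ A` and every large `m`, `f (p * m) = -f m` with `f m = ±1`.
-/

section CompletelyMultiplicative

variable {M : Type*} [Monoid M] {f : ℕ → M}

theorem isUnit_of_isUnit_prime (hf1 : f 1 = 1) (hfmul : ∀ m n, f (m * n) = f m * f n)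
    (hprime : ∀ p, p.Prime → IsUnit (f p)) {n : ℕ} (hn : n ≠ 0) : IsUnit (f n) := by
  induction n using induction_on_primes with
  | zero => exact (hn rfl).elim
  | one => simp [hf1]
  | prime_mul p a hp ih =>
    rw [hfmul]
    exact (hprime p hp).mul (ih (right_ne_zero_of_mul hn))

theorem succ_eq_of_periodic (hfmul : ∀ m n, f (m * n) = f m * f n) {N k : ℕ} (hk : 1 ≤ k)
    (hfk : IsUnit (f k)) (hper : ∀ n, N ≤ n → f (n + k) = f n) :
    ∀ n, N ≤ n → f (n + 1) = f n := by
  intro n hn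
  have h := hper (k * n) (hn.trans (Nat.le_mul_of_pos_left n hk))
  rw [show k * n + k = k * (n + 1) by ring, hfmul, hfmul] at h
  exact hfk.mul_left_cancel h

end CompletelyMultiplicative

theorem eq_of_succ_eq {α : Type*} {g : ℕ → α} {N : ℕ}
    (hg : ∀ n, N ≤ n → g (n + 1) = g n) : ∀ n, N ≤ n → g n = g N := by
  intro n hn
  induction n, hn using Nat.le_induction with
  | base => rfl
  | succ n hn ih => rw [hg n hn, ih]

/-- The generalized Liouville sequence `(λ_A(1), λ_A(2), …)` is not eventually
periodic, for `A` a nonempty set of primes. -/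
theorem stmt_0 (A : Set ℕ) (hA : A ⊆ {p | p.Prime}) (hne : A.Nonempty)
    (f : ℕ → ℤ) (hf1 : f 1 = 1) (hfmul : ∀ m n, f (m * n) = f m * f n)
    (hfA : ∀ p ∈ A, f p = -1)
    (hfA' : ∀ p, p.Prime → p ∉ A → f p = 1) :
    ¬ ∃ M k : ℕ, 1 ≤ k ∧ ∀ n, M ≤ n → f (n + k) = f n := by
  have hunit : ∀ n, n ≠ 0 → IsUnit (f n) := fun n =>
    isUnit_of_isUnit_prime hf1 hfmul fun p hp => by
      by_cases hpA : p ∈ A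
      · simp [hfA p hpA]
      · simp [hfA' p hp hpA]
  rintro ⟨M, k, hk, hper⟩
  have hconst := eq_of_succ_eq (succ_eq_of_periodic hfmul hk (hunit k (by omega)) hper)
  obtain ⟨p, hpA⟩ := hne
  have hp : p.Prime := hA hpA
  have hneg : f (p * (M + 1)) = -f (M + 1) := by rw [hfmul, hfA p hpA, neg_one_mul]
  have hsame : f (p * (M + 1)) = f (M + 1) := by
    rw [hconst _ (by nlinarith [hp.one_lt]), hconst (M + 1) (by omega)]
  have hzero : f (M + 1) = 0 := by omega
  exact (hunit (M + 1) (by omega)).ne_zero hzero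
end

section
/- For every α ∈ [0,1], there exists a set A of primes such that the (possibly infinite) product ∏_{p ∈ A} (p-1)/(p+1) converges to α (interpreting the product as 0 when it diverges to 0). -/
/-!
Greedy construction: run through the primes in increasing order and take `p` whenever the
running product, multiplied by `(p-1)/(p+1)`, stays `≥ α`. The running products decrease to
some `L ≥ α`. If `L > α`, then since `(p-1)/(p+1) → 1`, every large prime is taken; but
`1 - (p-1)/(p+1) = 2/(p+1)` and `∑ 1/p` diverges, so these factors drive the product to `0`,
contradicting `L > α ≥ 0`.
-/

open Filter Topology Finset

theorem tendsto_prod_one_sub_of_not_summable {a : ℕ → ℝ} (ha0 : ∀ i, 0 ≤ a i)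
    (ha1 : ∀ i, a i ≤ 1) (ha : ¬Summable a) :
    Tendsto (fun n ↦ ∏ i ∈ range n, (1 - a i)) atTop (𝓝 0) := by
  have hexp : Tendsto (fun n ↦ Real.exp (-∑ i ∈ range n, a i)) atTop (𝓝 0) :=
    Real.tendsto_exp_atBot.comp <| tendsto_neg_atTop_atBot.comp <|
      (not_summable_iff_tendsto_nat_atTop_of_nonneg ha0).1 ha
  refine squeeze_zero (fun n ↦ prod_nonneg fun i _ ↦ sub_nonneg.2 (ha1 i)) (fun n ↦ ?_) hexp
  rw [← sum_neg_distrib, Real.exp_sum]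
  exact prod_le_prod (fun i _ ↦ sub_nonneg.2 (ha1 i))
    fun i _ ↦ by linarith [Real.add_one_le_exp (-a i)]

theorem tendsto_prod_Ico_one_sub_of_not_summable {a : ℕ → ℝ} (ha0 : ∀ i, 0 ≤ a i)
    (ha1 : ∀ i, a i ≤ 1) (ha : ¬Summable a) (N : ℕ) :
    Tendsto (fun n ↦ ∏ i ∈ Ico N n, (1 - a i)) atTop (𝓝 0) := by
  have hshift : ¬Summable fun i ↦ a (N + i) := by
    simpa only [add_comm N] using (summable_nat_add_iff N).not.2 ha
  simp_rw [prod_Ico_eq_prod_range]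
  exact (tendsto_prod_one_sub_of_not_summable (fun i ↦ ha0 _) (fun i ↦ ha1 _) hshift).comp
    (tendsto_sub_atTop_nat N)

section Greedy

variable (f : ℕ → ℝ) (S : Set ℕ) (α : ℝ)

open scoped Classical in
noncomputable def greedyProd : ℕ → ℝ
  | 0 => 1
  | n + 1 => greedyProd n * if n ∈ S ∧ α ≤ greedyProd n * f n then f n else 1

def greedySet : Set ℕ := {n | n ∈ S ∧ α ≤ greedyProd f S α n * f n}

open scoped Classical in
theorem prod_range_greedySet (n : ℕ) :
    ∏ i ∈ range n, (if i ∈ greedySet f S α then f i else 1) = greedyProd f S α n := by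
  induction n with
  | zero => simp [greedyProd]
  | succ n ih =>
    rw [prod_range_succ, ih, greedyProd]
    exact congrArg _ (if_congr Iff.rfl rfl rfl)

variable {f S α}

theorem greedyProd_nonneg (hf0 : ∀ n ∈ S, 0 ≤ f n) (n : ℕ) : 0 ≤ greedyProd f S α n := by
  induction n with
  | zero => simp [greedyProd]
  | succ n ih =>
    rw [greedyProd]
    split_ifs with h
    · exact mul_nonneg ih (hf0 n h.1)
    · simpa using ih

theorem greedyProd_antitone (hf0 : ∀ n ∈ S, 0 ≤ f n) (hf1 : ∀ n ∈ S, f n ≤ 1) :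
    Antitone (greedyProd f S α) := by
  refine antitone_nat_of_succ_le fun n ↦ ?_
  rw [greedyProd]
  split_ifs with h
  · exact mul_le_of_le_one_right (greedyProd_nonneg hf0 n) (hf1 n h.1)
  · simp

theorem le_greedyProd (hα : α ≤ 1) (n : ℕ) : α ≤ greedyProd f S α n := by
  induction n with
  | zero => simpa [greedyProd] using hα
  | succ n ih =>
    rw [greedyProd]
    split_ifs with h
    · exact h.2
    · simpa using ih

theorem eventually_mem_greedySet {L : ℝ} (hf0 : ∀ n ∈ S, 0 ≤ f n) (hf : Tendsto f atTop (𝓝 1))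
    (hL : ∀ n, L ≤ greedyProd f S α n) (hαL : α < L) :
    ∀ᶠ n in atTop, n ∈ S → n ∈ greedySet f S α := by
  have hLf : ∀ᶠ n in atTop, α < L * f n :=
    (hf.const_mul L).eventually (lt_mem_nhds (by simpa using hαL))
  filter_upwards [hLf] with n hn hnS
  exact ⟨hnS, hn.le.trans (mul_le_mul_of_nonneg_right (hL n) (hf0 n hnS))⟩

theorem tendsto_greedyProd_zero (hf0 : ∀ n ∈ S, 0 ≤ f n) (hf1 : ∀ n ∈ S, f n ≤ 1)
    (hS : ¬Summable (S.indicator (1 - f))) {N : ℕ}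
    (hN : ∀ n ≥ N, n ∈ S → n ∈ greedySet f S α) :
    Tendsto (greedyProd f S α) atTop (𝓝 0) := by
  have hind0 : ∀ i, 0 ≤ S.indicator (1 - f) i := fun i ↦
    Set.indicator_nonneg (fun i hi ↦ sub_nonneg.2 (hf1 i hi)) i
  have hind1 : ∀ i, S.indicator (1 - f) i ≤ 1 := fun i ↦ by
    by_cases hi : i ∈ S <;> simp [hi, hf0 i]
  have htail : ∀ n ≥ N, greedyProd f S α n =
      greedyProd f S α N * ∏ i ∈ Ico N n, (1 - S.indicator (1 - f) i) := by
    intro n hn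
    rw [← prod_range_greedySet, ← prod_range_greedySet, ← prod_range_mul_prod_Ico _ hn]
    congr 1
    refine prod_congr rfl fun i hi ↦ ?_
    have hiN := (mem_Ico.1 hi).1
    by_cases hiS : i ∈ S
    · simp [hiS, hN i hiN hiS]
    · simp [hiS, show i ∉ greedySet f S α from fun h ↦ hiS h.1]
  have := (tendsto_prod_Ico_one_sub_of_not_summable hind0 hind1 hS N).const_mul
    (greedyProd f S α N)
  rw [mul_zero] at this
  exact this.congr' (eventually_atTop.2 ⟨N, fun n hn ↦ (htail n hn).symm⟩)

theorem tendsto_greedyProd (hf0 : ∀ n ∈ S, 0 ≤ f n) (hf1 : ∀ n ∈ S, f n ≤ 1)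
    (hf : Tendsto f atTop (𝓝 1)) (hS : ¬Summable (S.indicator (1 - f)))
    (hα0 : 0 ≤ α) (hα1 : α ≤ 1) :
    Tendsto (greedyProd f S α) atTop (𝓝 α) := by
  have hanti := greedyProd_antitone (α := α) hf0 hf1
  obtain ⟨L, hL⟩ : ∃ L, Tendsto (greedyProd f S α) atTop (𝓝 L) :=
    ⟨_, tendsto_atTop_ciInf hanti ⟨0, Set.forall_mem_range.2 (greedyProd_nonneg hf0)⟩⟩
  rcases (ge_of_tendsto' hL (le_greedyProd hα1)).eq_or_lt with rfl | hαL
  · exact hL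
  obtain ⟨N, hN⟩ := eventually_atTop.1
    (eventually_mem_greedySet hf0 hf (hanti.le_of_tendsto hL) hαL)
  linarith [tendsto_nhds_unique hL (tendsto_greedyProd_zero hf0 hf1 hS hN)]

end Greedy

theorem not_summable_two_div_add_one_on_primes :
    ¬Summable (Set.indicator {p | p.Prime} fun n : ℕ ↦ (2 : ℝ) / (n + 1)) := by
  refine fun h ↦ not_summable_one_div_on_primes <| h.of_nonneg_of_le
    (fun n ↦ Set.indicator_nonneg (fun n _ ↦ by positivity) n) fun n ↦ ?_
  refine Set.indicator_le_indicator ?_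
  rcases Nat.eq_zero_or_pos n with rfl | hn
  · simp
  · have hn : (1 : ℝ) ≤ n := by exact_mod_cast hn
    rw [div_le_div_iff₀ (by linarith) (by linarith)]
    linarith

theorem one_sub_sub_one_div_add_one (n : ℕ) :
    1 - ((n : ℝ) - 1) / (n + 1) = 2 / (n + 1) := by
  field_simp
  ring

theorem tendsto_sub_one_div_add_one :
    Tendsto (fun n : ℕ ↦ ((n : ℝ) - 1) / (n + 1)) atTop (𝓝 1) := by
  have h := (tendsto_one_div_add_atTop_nhds_zero_nat (𝕜 := ℝ)).const_mul 2 |>.const_sub 1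
  simp only [mul_zero, sub_zero] at h
  refine h.congr fun n ↦ ?_
  rw [mul_one_div, ← one_sub_sub_one_div_add_one, sub_sub_cancel]

open scoped Classical in
/-- For every `α ∈ [0,1]` there is a set `A` of primes with
`∏_{p ∈ A} (p-1)/(p+1) = α` (a divergent infinite product having value `0`):
the partial products converge to `α`. -/
theorem stmt_4 (α : ℝ) (hα : α ∈ Set.Icc (0 : ℝ) 1) :
    ∃ A : Set ℕ, A ⊆ {p | p.Prime} ∧
      Tendsto (fun n : ℕ => ∏ p ∈ Finset.range n,
          (if p ∈ A then ((p : ℝ) - 1) / ((p : ℝ) + 1) else 1))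
        atTop (nhds α) := by
  set f : ℕ → ℝ := fun n ↦ ((n : ℝ) - 1) / (n + 1)
  have hf0 : ∀ p ∈ {p | p.Prime}, 0 ≤ f p := fun p hp ↦
    div_nonneg (sub_nonneg.2 (by exact_mod_cast hp.one_lt.le)) (by positivity)
  have hf1 : ∀ p ∈ {p | p.Prime}, f p ≤ 1 := fun p _ ↦
    (div_le_one (by positivity)).2 (by linarith)
  have hS : ¬Summable ({p | p.Prime}.indicator (1 - f)) := by
    rw [show 1 - f = fun n : ℕ ↦ 2 / ((n : ℝ) + 1) from funext one_sub_sub_one_div_add_one]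
    exact not_summable_two_div_add_one_on_primes
  refine ⟨greedySet f {p | p.Prime} α, fun p hp ↦ hp.1, ?_⟩
  simp only [f, prod_range_greedySet]
  exact tendsto_greedyProd hf0 hf1 tendsto_sub_one_div_add_one hS hα.1 hα.2
end

section
/- For every α ∈ [0,1], there exists a sequence (n_k) of squarefree positive integers such that φ(n_k)/σ(n_k) → α as k → ∞. -/
/-!
Choose primes greedily: run through the primes in increasing order and multiply `p` into `n`
whenever `φ(n p)/σ(n p) = φ(n)/σ(n) · (p - 1)/(p + 1)` stays `≥ α`. The ratio of the resulting
squarefree `n_k` then decreases and stays `≥ α`. If `p` is refused infinitely often, at a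
refusal the ratio lies below `α (p + 1)/(p - 1)`, which tends to `α`. Otherwise all
late primes are taken, and since `∑ 1/p = ∞` the product of `(p - 1)/(p + 1)` over them is `0`,
so the ratio tends to `0 ≤ α`.
-/

open Filter Finset Topology
open scoped Function

theorem tendsto_prod_range_one_sub_of_not_summable {a : ℕ → ℝ} (ha0 : ∀ i, 0 ≤ a i)
    (ha1 : ∀ i, a i ≤ 1) (ha : ¬ Summable a) :
    Tendsto (fun k => ∏ i ∈ range k, (1 - a i)) atTop (𝓝 0) := by
  have hsum : Tendsto (fun k => ∑ i ∈ range k, a i) atTop atTop :=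
    (not_summable_iff_tendsto_nat_atTop_of_nonneg ha0).mp ha
  have hexp : Tendsto (fun k => Real.exp (-∑ i ∈ range k, a i)) atTop (𝓝 0) :=
    Real.tendsto_exp_atBot.comp (tendsto_neg_atTop_atBot.comp hsum)
  refine tendsto_of_tendsto_of_tendsto_of_le_of_le tendsto_const_nhds hexp
    (fun k => prod_nonneg fun i _ => sub_nonneg.mpr (ha1 i)) fun k => ?_
  calc ∏ i ∈ range k, (1 - a i) ≤ ∏ i ∈ range k, Real.exp (-a i) :=
        prod_le_prod (fun i _ => sub_nonneg.mpr (ha1 i)) fun i _ => by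
          linarith [Real.add_one_le_exp (-a i)]
    _ = Real.exp (-∑ i ∈ range k, a i) := by rw [← Real.exp_sum, sum_neg_distrib]

noncomputable def greedySubset (f : ℕ → ℝ) (α : ℝ) : ℕ → Finset ℕ
  | 0 => ∅
  | k + 1 =>
    if α ≤ (∏ i ∈ greedySubset f α k, f i) * f k then insert k (greedySubset f α k)
    else greedySubset f α k

namespace greedySubset

variable {f : ℕ → ℝ} {α : ℝ}

theorem subset_range (k : ℕ) : greedySubset f α k ⊆ range k := by
  induction k with
  | zero => simp [greedySubset]
  | succ k ih =>
    rw [greedySubset, range_add_one]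
    split_ifs
    · exact insert_subset_insert k ih
    · exact ih.trans (subset_insert k _)

theorem prod_succ (k : ℕ) :
    ∏ i ∈ greedySubset f α (k + 1), f i =
      if α ≤ (∏ i ∈ greedySubset f α k, f i) * f k then (∏ i ∈ greedySubset f α k, f i) * f k
      else ∏ i ∈ greedySubset f α k, f i := by
  have hk : k ∉ greedySubset f α k := fun h => notMem_range_self (subset_range k h)
  rw [greedySubset]
  split_ifs
  · rw [prod_insert hk, mul_comm]
  · rfl

theorem le_prod (hα : α ≤ 1) (k : ℕ) : α ≤ ∏ i ∈ greedySubset f α k, f i := by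
  induction k with
  | zero => simpa [greedySubset] using hα
  | succ k ih =>
    rw [prod_succ]
    split_ifs with h
    exacts [h, ih]

theorem antitone_prod (hf0 : ∀ i, 0 ≤ f i) (hf1 : ∀ i, f i ≤ 1) :
    Antitone fun k => ∏ i ∈ greedySubset f α k, f i := by
  refine antitone_nat_of_succ_le fun k => ?_
  rw [prod_succ]
  split_ifs
  · exact mul_le_of_le_one_right (prod_nonneg fun i _ => hf0 i) (hf1 k)
  · rfl

theorem prod_eq_mul_prod_Ico {K : ℕ}
    (hK : ∀ j, K ≤ j → α ≤ (∏ i ∈ greedySubset f α j, f i) * f j) {k : ℕ} (hk : K ≤ k) :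
    ∏ i ∈ greedySubset f α k, f i = (∏ i ∈ greedySubset f α K, f i) * ∏ i ∈ Ico K k, f i := by
  induction k, hk using Nat.le_induction with
  | base => simp
  | succ k hk ih => rw [prod_succ, if_pos (hK k hk), ih, prod_Ico_succ_top hk, mul_assoc]

theorem exists_prod_lt (hf0 : ∀ i, 0 < f i) (hf : Tendsto f atTop (𝓝 1))
    (hprod : Tendsto (fun k => ∏ i ∈ range k, f i) atTop (𝓝 0)) (hα : 0 ≤ α) {b : ℝ}
    (hb : α < b) : ∃ k, ∏ i ∈ greedySubset f α k, f i < b := by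
  obtain ⟨K, hK⟩ : ∃ K, ∀ k, K ≤ k → α < b * f k := by
    refine eventually_atTop.mp ((hf.const_mul b).eventually (lt_mem_nhds ?_))
    rwa [mul_one]
  by_cases hrefused : ∃ k, K ≤ k ∧ (∏ i ∈ greedySubset f α k, f i) * f k < α
  · obtain ⟨k, hKk, hk⟩ := hrefused
    exact ⟨k, lt_of_mul_lt_mul_right (hk.trans (hK k hKk)) (hf0 k).le⟩
  · push Not at hrefused
    -- every factor from `K` on is taken, so multiplying by `c` gives a multiple of `∏ i < k, f i`
    set c := ∏ i ∈ range K, f i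
    have hc : 0 < c := prod_pos fun i _ => hf0 i
    have hsmall :
        ∀ᶠ k in atTop, (∏ i ∈ greedySubset f α K, f i) * ∏ i ∈ range k, f i < c * b := by
      refine (hprod.const_mul _).eventually (gt_mem_nhds ?_)
      rw [mul_zero]
      exact mul_pos hc (hα.trans_lt hb)
    obtain ⟨k, hk, hKk⟩ := (hsmall.and (eventually_ge_atTop K)).exists
    refine ⟨k, lt_of_mul_lt_mul_left ?_ hc.le⟩
    rwa [prod_eq_mul_prod_Ico hrefused hKk, mul_left_comm, prod_range_mul_prod_Ico f hKk]

theorem tendsto_prod (hf0 : ∀ i, 0 < f i) (hf1 : ∀ i, f i ≤ 1) (hf : Tendsto f atTop (𝓝 1))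
    (hprod : Tendsto (fun k => ∏ i ∈ range k, f i) atTop (𝓝 0)) (hα : α ∈ Set.Icc 0 1) :
    Tendsto (fun k => ∏ i ∈ greedySubset f α k, f i) atTop (𝓝 α) := by
  refine tendsto_order.2 ⟨fun a ha => Eventually.of_forall fun k => ha.trans_le (le_prod hα.2 k),
    fun b hb => ?_⟩
  obtain ⟨k, hk⟩ := exists_prod_lt hf0 hf hprod hα.1 hb
  exact eventually_atTop.2
    ⟨k, fun m hm => (antitone_prod (fun i => (hf0 i).le) hf1 hm).trans_lt hk⟩

end greedySubset

noncomputable def totientSigmaRatio (n : ℕ) : ℝ :=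
  (Nat.totient n : ℝ) / (ArithmeticFunction.sigma 1 n : ℝ)

theorem totientSigmaRatio_mul {m n : ℕ} (h : m.Coprime n) :
    totientSigmaRatio (m * n) = totientSigmaRatio m * totientSigmaRatio n := by
  rw [totientSigmaRatio, Nat.totient_mul h,
    ArithmeticFunction.isMultiplicative_sigma.map_mul_of_coprime h, Nat.cast_mul, Nat.cast_mul,
    mul_div_mul_comm, totientSigmaRatio, totientSigmaRatio]

theorem totientSigmaRatio_prod {ι : Type*} {s : Finset ι} {g : ι → ℕ}
    (hs : (s : Set ι).Pairwise (Nat.Coprime on g)) :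
    totientSigmaRatio (∏ i ∈ s, g i) = ∏ i ∈ s, totientSigmaRatio (g i) := by
  classical
  induction s using Finset.induction_on with
  | empty => simp [totientSigmaRatio]
  | insert a s ha ih =>
    rw [coe_insert, Set.pairwise_insert_of_symm] at hs
    rw [prod_insert ha, prod_insert ha, totientSigmaRatio_mul, ih hs.1]
    exact Nat.Coprime.prod_right fun i hi => hs.2 i hi (ne_of_mem_of_not_mem hi ha).symm

theorem totientSigmaRatio_prime {p : ℕ} (hp : p.Prime) :
    totientSigmaRatio p = 1 - 2 / ((p : ℝ) + 1) := by
  have hσ : ArithmeticFunction.sigma 1 p = p + 1 := by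
    simpa [sum_range_succ, add_comm] using ArithmeticFunction.sigma_one_apply_prime_pow (i := 1) hp
  rw [totientSigmaRatio, Nat.totient_prime hp, hσ, Nat.cast_sub hp.one_le]
  field_simp
  push_cast
  ring

theorem two_div_prime_add_one_lt_one {p : ℕ} (hp : p.Prime) : 2 / ((p : ℝ) + 1) < 1 := by
  have : (2 : ℝ) ≤ p := by exact_mod_cast hp.two_le
  rw [div_lt_one (by positivity)]
  linarith

theorem totientSigmaRatio_prime_pos {p : ℕ} (hp : p.Prime) : 0 < totientSigmaRatio p := by
  rw [totientSigmaRatio_prime hp, sub_pos]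
  exact two_div_prime_add_one_lt_one hp

theorem totientSigmaRatio_prime_le_one {p : ℕ} (hp : p.Prime) : totientSigmaRatio p ≤ 1 := by
  rw [totientSigmaRatio_prime hp, sub_le_self_iff]
  positivity

theorem not_summable_one_div_nth_prime : ¬ Summable fun k => 1 / (Nat.nth Nat.Prime k : ℝ) := by
  intro h
  refine not_summable_one_div_on_primes ?_
  rw [← (Nat.nth_injective Nat.infinite_setOfPred_prime).summable_iff]
  · convert h using 2 with k
    simp
  · intro n hn
    rw [Nat.range_nth_of_infinite Nat.infinite_setOfPred_prime] at hn
    exact Set.indicator_of_notMem hn _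

theorem tendsto_totientSigmaRatio_nth_prime :
    Tendsto (fun k => totientSigmaRatio (Nat.nth Nat.Prime k)) atTop (𝓝 1) := by
  simp_rw [totientSigmaRatio_prime (Nat.prime_nth_prime _)]
  have hp : Tendsto (fun k => (Nat.nth Nat.Prime k : ℝ) + 1) atTop atTop :=
    tendsto_atTop_add_const_right _ 1 <| tendsto_natCast_atTop_atTop.comp <|
      (Nat.nth_strictMono Nat.infinite_setOfPred_prime).tendsto_atTop
  simpa using (tendsto_const_nhds (x := (1 : ℝ))).sub (tendsto_const_nhds.div_atTop hp)

theorem tendsto_prod_totientSigmaRatio_nth_prime :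
    Tendsto (fun k => ∏ i ∈ range k, totientSigmaRatio (Nat.nth Nat.Prime i)) atTop (𝓝 0) := by
  simp_rw [totientSigmaRatio_prime (Nat.prime_nth_prime _)]
  refine tendsto_prod_range_one_sub_of_not_summable (fun i => by positivity)
    (fun i => (two_div_prime_add_one_lt_one (Nat.prime_nth_prime i)).le) fun h => ?_
  refine not_summable_one_div_nth_prime (h.of_nonneg_of_le (fun i => by positivity) fun i => ?_)
  have : (1 : ℝ) ≤ Nat.nth Nat.Prime i := by exact_mod_cast (Nat.prime_nth_prime i).one_le
  rw [div_le_div_iff₀ (by positivity) (by positivity)]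
  linarith

theorem pairwise_coprime_nth_prime (s : Set ℕ) : s.Pairwise (Nat.Coprime on Nat.nth Nat.Prime) :=
  fun _ _ _ _ hij => (Nat.coprime_primes (Nat.prime_nth_prime _) (Nat.prime_nth_prime _)).mpr
    ((Nat.nth_injective Nat.infinite_setOfPred_prime).ne hij)

theorem squarefree_prod_nth_prime (s : Finset ℕ) : Squarefree (∏ i ∈ s, Nat.nth Nat.Prime i) :=
  Finset.squarefree_prod_of_pairwise_isCoprime
    ((pairwise_coprime_nth_prime s).mono' fun _ _ => Nat.coprime_iff_isRelPrime.mp)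
    fun i _ => (Nat.prime_nth_prime i).squarefree

/-- For every `α ∈ [0,1]` there is a sequence of squarefree positive integers
`n_k` with `φ(n_k)/σ(n_k) → α`. -/
theorem stmt_5 (α : ℝ) (hα : α ∈ Set.Icc (0 : ℝ) 1) :
    ∃ n : ℕ → ℕ, (∀ k, Squarefree (n k) ∧ 0 < n k) ∧
      Tendsto (fun k => (Nat.totient (n k) : ℝ) / (ArithmeticFunction.sigma 1 (n k) : ℝ))
        atTop (nhds α) := by
  set f := fun k => totientSigmaRatio (Nat.nth Nat.Prime k)
  refine ⟨fun k => ∏ i ∈ greedySubset f α k, Nat.nth Nat.Prime i, fun k =>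
    ⟨squarefree_prod_nth_prime _, prod_pos fun i _ => (Nat.prime_nth_prime i).pos⟩, ?_⟩
  have hlim := greedySubset.tendsto_prod
    (fun i => totientSigmaRatio_prime_pos (Nat.prime_nth_prime i))
    (fun i => totientSigmaRatio_prime_le_one (Nat.prime_nth_prime i))
    tendsto_totientSigmaRatio_nth_prime tendsto_prod_totientSigmaRatio_nth_prime hα
  exact hlim.congr fun k => (totientSigmaRatio_prod (pairwise_coprime_nth_prime _)).symm
end

section
/- Let χ be a non-principal Dirichlet character mod p and f the completely multiplicative function with f(p) = 1 and f(q) = χ(q) for primes q ≠ p. Then ∑_{j=1}^n f(j) = ∑_{l=0}^{p-1} N(n,l) · (∑_{m=1}^{l} χ(m)), where N(n,l) is the number of digits equal to l in the base-p expansion of n. -/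
/-!
Off the multiples of `p` the function `f` agrees with `χ`, while `f (p * k) = f k`. Hence
`S n = ∑_{1 ≤ j ≤ n} f j` satisfies `S n = A (n % p) + S (n / p)` with `A l = ∑_{1 ≤ m ≤ l} χ m`,
because `χ` sums to zero over every block of `p` consecutive integers. Unwinding this recursion
along the base-`p` expansion of `n` gives `S n = ∑ A d` over the digits `d` of `n`.
-/

open Finset Function

theorem Function.Periodic.sum_range_eq_sum_range_mod {M : Type*} [AddCommMonoid M] {g : ℕ → M}
    {c : ℕ} (hg : Periodic g c) (hsum : ∑ i ∈ range c, g i = 0) (m : ℕ) :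
    ∑ i ∈ range m, g i = ∑ i ∈ range (m % c), g i := by
  have hshift : ∀ q i, g (c * q + i) = g i := fun q i => by
    simpa [add_comm, mul_comm] using hg.nat_mul q i
  have hblocks : ∀ q, ∑ i ∈ range (c * q), g i = 0 := by
    intro q
    induction q with
    | zero => simp
    | succ q ih =>
      rw [mul_add_one, sum_range_add, ih, zero_add, ← hsum]
      exact sum_congr rfl fun i _ => hshift q i
  conv_lhs => rw [← Nat.div_add_mod m c]
  rw [sum_range_add, hblocks, zero_add]
  exact sum_congr rfl fun i _ => hshift _ i

theorem ZMod.sum_range_natCast {M : Type*} [AddCommMonoid M] {n : ℕ} [NeZero n]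
    (g : ZMod n → M) : ∑ j ∈ range n, g j = ∑ a, g a :=
  sum_nbij' (fun j => (j : ZMod n)) ZMod.val (fun _ _ => mem_univ _)
    (fun a _ => mem_range.mpr a.val_lt) (fun _ hj => ZMod.val_natCast_of_lt (mem_range.mp hj))
    (fun a _ => ZMod.natCast_zmod_val a) (fun _ _ => rfl)

namespace DirichletCharacter

variable {R : Type*} [CommRing R] [IsDomain R] {n : ℕ} [NeZero n] {χ : DirichletCharacter R n}

theorem sum_range_add_eq_zero (hχ : χ ≠ 1) (c : ℕ) :
    ∑ j ∈ range n, χ ((j + c : ℕ) : ZMod n) = 0 := by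
  push_cast
  rw [ZMod.sum_range_natCast (fun a => χ (a + (c : ZMod n))),
    Fintype.sum_equiv (Equiv.addRight (c : ZMod n)) (fun a => χ (a + c)) χ (fun _ => rfl)]
  exact MulChar.sum_eq_zero_of_ne_one hχ

theorem sum_Icc_one_eq_sum_Icc_one_mod (hχ : χ ≠ 1) (m : ℕ) :
    ∑ j ∈ Icc 1 m, χ (j : ZMod n) = ∑ j ∈ Icc 1 (m % n), χ (j : ZMod n) := by
  have hshift : ∀ k : ℕ,
      ∑ j ∈ Icc 1 k, χ (j : ZMod n) = ∑ j ∈ range k, χ ((j + 1 : ℕ) : ZMod n) := fun k => by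
    rw [range_eq_Ico, sum_Ico_add' (fun j : ℕ => χ (j : ZMod n)), ← Ico_add_one_right_eq_Icc,
      zero_add]
  have hper : Periodic (fun j : ℕ => χ ((j + 1 : ℕ) : ZMod n)) n := fun j => by
    simp [add_right_comm j n 1]
  rw [hshift, hshift, hper.sum_range_eq_sum_range_mod (sum_range_add_eq_zero hχ 1)]

end DirichletCharacter

theorem Nat.eq_of_map_mul_of_eq_on_prime_dvd {M : Type*} [Monoid M] {f g : ℕ → M}
    (hf1 : f 1 = 1) (hg1 : g 1 = 1) (hfmul : ∀ a b, f (a * b) = f a * f b)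
    (hgmul : ∀ a b, g (a * b) = g a * g b) {j : ℕ} (hj : j ≠ 0)
    (hfg : ∀ q, q.Prime → q ∣ j → f q = g q) : f j = g j := by
  induction j using Nat.recOnMul with
  | zero => exact absurd rfl hj
  | one => rw [hf1, hg1]
  | prime q hq => exact hfg q hq dvd_rfl
  | mul a b iha ihb =>
    obtain ⟨ha, hb⟩ := mul_ne_zero_iff.mp hj
    rw [hfmul, hgmul, iha ha fun q hq h => hfg q hq (h.mul_right b),
      ihb hb fun q hq h => hfg q hq (h.mul_left a)]

theorem Nat.Icc_one_filter_dvd_eq_image {p : ℕ} (hp : 0 < p) (n : ℕ) :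
    {j ∈ Icc 1 n | p ∣ j} = (Icc 1 (n / p)).image (p * ·) := by
  ext j
  simp only [mem_filter, mem_Icc, mem_image]
  constructor
  · rintro ⟨⟨hj1, hjn⟩, k, rfl⟩
    refine ⟨k, ⟨Nat.pos_of_ne_zero ?_, (Nat.le_div_iff_mul_le hp).mpr ?_⟩, rfl⟩
    · rintro rfl; simp at hj1
    · rwa [mul_comm]
  · rintro ⟨k, ⟨hk1, hkn⟩, rfl⟩
    refine ⟨⟨Nat.one_le_iff_ne_zero.mpr (mul_ne_zero hp.ne' (by omega)), ?_⟩, dvd_mul_right p k⟩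
    rw [mul_comm]; exact (Nat.le_div_iff_mul_le hp).mp hkn

theorem Nat.sum_map_digits_eq_sum_range_count {M : Type*} [AddCommMonoid M] {b : ℕ} (hb : 1 < b)
    (A : ℕ → M) (n : ℕ) :
    ((digits b n).map A).sum = ∑ l ∈ range b, (digits b n).count l • A l := by
  rw [sum_list_map_count]
  refine sum_subset (fun l hl => mem_range.mpr ?_) fun l _ hl => ?_
  · exact digits_lt_base hb (List.mem_toFinset.mp hl)
  · rw [List.count_eq_zero_of_not_mem (mt List.mem_toFinset.mpr hl), zero_smul]

theorem Nat.eq_sum_map_digits_of_eq_add_mod_div {M : Type*} [AddCommMonoid M] {b : ℕ}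
    (hb : 1 < b) {S : ℕ → M} (A : ℕ → M) (h0 : S 0 = 0)
    (hS : ∀ n, 0 < n → S n = A (n % b) + S (n / b)) (n : ℕ) :
    S n = ((digits b n).map A).sum := by
  induction n using Nat.strong_induction_on with
  | _ n ih =>
    rcases Nat.eq_zero_or_pos n with rfl | hn
    · simp [h0]
    · rw [hS n hn, ih _ (Nat.div_lt_self hn hb), digits_def' hb hn, List.map_cons, List.sum_cons]

theorem eq_dirichletCharacter_of_not_dvd {R : Type*} [CommMonoidWithZero R] {p : ℕ}
    {χ : DirichletCharacter R p} {f : ℕ → R}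
    (hf1 : f 1 = 1) (hfmul : ∀ m n, f (m * n) = f m * f n)
    (hfq : ∀ q : ℕ, q.Prime → q ≠ p → f q = χ (q : ZMod p)) {j : ℕ} (hj : ¬ p ∣ j) :
    f j = χ (j : ZMod p) :=
  Nat.eq_of_map_mul_of_eq_on_prime_dvd (g := fun j : ℕ => χ (j : ZMod p)) hf1 (by simp) hfmul
    (fun a b => by simp) (by rintro rfl; exact hj (dvd_zero p))
    fun q hq hqj => hfq q hq fun hqp => hj (hqp ▸ hqj)

theorem sum_Icc_one_eq_add_sum_Icc_one_div {R : Type*} [CommRing R] {p : ℕ} (hp : p.Prime)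
    {χ : DirichletCharacter R p} {f : ℕ → R} (hf1 : f 1 = 1)
    (hfmul : ∀ m n, f (m * n) = f m * f n) (hfp : f p = 1)
    (hfq : ∀ q : ℕ, q.Prime → q ≠ p → f q = χ (q : ZMod p)) (n : ℕ) :
    ∑ j ∈ Icc 1 n, f j = ∑ j ∈ Icc 1 n, χ (j : ZMod p) + ∑ k ∈ Icc 1 (n / p), f k := by
  have : Fact p.Prime := ⟨hp⟩
  rw [← sum_filter_not_add_sum_filter (Icc 1 n) (p ∣ ·), Nat.Icc_one_filter_dvd_eq_image hp.pos,
    sum_image fun a _ b _ h => Nat.eq_of_mul_eq_mul_left hp.pos h]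
  congr 1
  · rw [sum_congr rfl fun j hj => eq_dirichletCharacter_of_not_dvd hf1 hfmul hfq
      (mem_filter.mp hj).2]
    refine sum_filter_of_ne fun j _ hj hpj => hj ?_
    rw [(ZMod.natCast_eq_zero_iff j p).mpr hpj, MulChar.map_zero]
  · exact sum_congr rfl fun k _ => by rw [hfmul, hfp, one_mul]

/-- For a non-principal Dirichlet character `χ` mod `p` and the completely
multiplicative `f` with `f(p) = 1`, `f(q) = χ(q)` at primes `q ≠ p`,
`∑_{j=1}^n f(j) = ∑_{l=0}^{p-1} N(n,l) ∑_{m=1}^{l} χ(m)` where `N(n,l)` counts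
digits equal to `l` in the base-`p` expansion of `n`. -/
theorem stmt_10 (p : ℕ) (hp : p.Prime) (χ : DirichletCharacter ℂ p)
    (hχ : χ ≠ 1)
    (f : ℕ → ℂ) (hf1 : f 1 = 1) (hfmul : ∀ m n, f (m * n) = f m * f n)
    (hfp : f p = 1) (hfq : ∀ q : ℕ, q.Prime → q ≠ p → f q = χ (q : ZMod p))
    (n : ℕ) :
    ∑ j ∈ Finset.Icc 1 n, f j
      = ∑ l ∈ Finset.range p,
          ((Nat.digits p n).count l : ℂ) * ∑ m ∈ Finset.Icc 1 l, χ (m : ZMod p) := by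
  have : NeZero p := ⟨hp.ne_zero⟩
  have hrec : ∀ m, 0 < m → ∑ j ∈ Icc 1 m, f j
      = ∑ j ∈ Icc 1 (m % p), χ (j : ZMod p) + ∑ k ∈ Icc 1 (m / p), f k := fun m _ => by
    rw [sum_Icc_one_eq_add_sum_Icc_one_div hp hf1 hfmul hfp hfq,
      DirichletCharacter.sum_Icc_one_eq_sum_Icc_one_mod hχ]
  rw [Nat.eq_sum_map_digits_of_eq_add_mod_div hp.one_lt (S := fun m => ∑ j ∈ Icc 1 m, f j)
    (fun l => ∑ j ∈ Icc 1 l, χ (j : ZMod p)) (by simp) hrec n,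
    Nat.sum_map_digits_eq_sum_range_count hp.one_lt]
  simp only [nsmul_eq_mul]
end

section
/- L_3(n) equals the number of digits equal to 1 in the base-3 expansion of n. -/
/-!
Away from multiples of `3`, `λ₃` is the Legendre symbol `(· / 3)`, whose partial sums are
`1` or `0` according as `n ≡ 1 (mod 3)` or not; on multiples of `3` it satisfies
`λ₃(3m) = λ₃(m)`. Hence `L₃(n) = [n % 3 = 1] + L₃(⌊n / 3⌋)`, which is exactly the recursion for
the number of digits `1` of `n` in base `3`.
-/

open Finset

theorem apply_eq_legendreSym_of_not_dvd {p : ℕ} [Fact p.Prime] (f : ℕ → ℤ) (hf1 : f 1 = 1)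
    (hfmul : ∀ m n, f (m * n) = f m * f n)
    (hfq : ∀ q : ℕ, q.Prime → q ≠ p → f q = legendreSym p q) :
    ∀ m : ℕ, ¬ p ∣ m → f m = legendreSym p m := by
  refine induction_on_primes (by simp) (fun _ => by simp [hf1, legendreSym.at_one]) ?_
  intro q a hq ih hqa
  have hqp : q ≠ p := by rintro rfl; exact hqa (dvd_mul_right q a)
  rw [hfmul, hfq q hq hqp, ih fun h => hqa (h.mul_left q), Nat.cast_mul, legendreSym.mul]

theorem sum_Icc_legendreSym_three (n : ℕ) :
    ∑ m ∈ Icc 1 n, legendreSym 3 m = if n % 3 = 1 then 1 else 0 := by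
  induction n with
  | zero => simp
  | succ n ih =>
    rw [sum_Icc_succ_top (by omega), ih, legendreSym.mod]
    have hmod : ((n + 1 : ℕ) : ℤ) % ((3 : ℕ) : ℤ) = ((n % 3 + 1) % 3 : ℕ) := by push_cast; omega
    have htwo : legendreSym 3 2 = -1 := by decide
    rw [hmod]
    rcases (by omega : n % 3 = 0 ∨ n % 3 = 1 ∨ n % 3 = 2) with h | h | h <;>
      simp [h, Nat.add_mod, htwo]

theorem sum_Icc_filter_dvd {M : Type*} [AddCommMonoid M] {p : ℕ} (hp : 0 < p) (n : ℕ)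
    (g : ℕ → M) : ∑ m ∈ Icc 1 n with p ∣ m, g m = ∑ j ∈ Icc 1 (n / p), g (p * j) := by
  have hle : ∀ j, j ≤ n / p ↔ p * j ≤ n := fun j => by rw [Nat.le_div_iff_mul_le hp, mul_comm]
  have himage : {m ∈ Icc 1 n | p ∣ m} = (Icc 1 (n / p)).image (p * ·) := by
    ext m
    simp only [mem_filter, mem_Icc, mem_image]
    constructor
    · rintro ⟨⟨h1, hn⟩, j, rfl⟩
      exact ⟨j, ⟨Nat.pos_of_mul_pos_left h1, (hle j).2 hn⟩, rfl⟩
    · rintro ⟨j, ⟨h1, hj⟩, rfl⟩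
      exact ⟨⟨Nat.mul_pos hp h1, (hle j).1 hj⟩, dvd_mul_right p j⟩
  rw [himage, sum_image fun a _ b _ h => Nat.eq_of_mul_eq_mul_left hp h]

theorem sum_Icc_eq_ite_add_sum_Icc_div_three (f : ℕ → ℤ)
    (h3 : ∀ m, f (3 * m) = f m) (hχ : ∀ m : ℕ, ¬ 3 ∣ m → f m = legendreSym 3 m) (n : ℕ) :
    ∑ m ∈ Icc 1 n, f m = (if n % 3 = 1 then 1 else 0) + ∑ j ∈ Icc 1 (n / 3), f j := by
  have hsplit : ∀ m : ℕ, f m = legendreSym 3 m + if 3 ∣ m then f m else 0 := by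
    intro m
    by_cases hm : 3 ∣ m
    · have hzero : legendreSym 3 m = 0 :=
        (legendreSym.eq_zero_iff 3 m).2 ((ZMod.natCast_eq_zero_iff m 3).2 hm)
      simp [hm, hzero]
    · simp [hm, hχ m hm]
  rw [sum_congr rfl fun m _ => hsplit m, sum_add_distrib, sum_Icc_legendreSym_three,
    ← sum_filter, sum_Icc_filter_dvd (by norm_num)]
  simp only [h3]

theorem sum_Icc_eq_count_digits_one (f : ℕ → ℤ)
    (h3 : ∀ m, f (3 * m) = f m) (hχ : ∀ m : ℕ, ¬ 3 ∣ m → f m = legendreSym 3 m) (n : ℕ) :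
    ∑ m ∈ Icc 1 n, f m = ((Nat.digits 3 n).count 1 : ℤ) := by
  induction n using Nat.strong_induction_on with
  | _ n ih =>
    rcases Nat.eq_zero_or_pos n with rfl | hn
    · simp
    rw [sum_Icc_eq_ite_add_sum_Icc_div_three f h3 hχ,
      ih (n / 3) (Nat.div_lt_self hn (by norm_num)), Nat.digits_def' (by norm_num) hn,
      List.count_cons]
    by_cases h : n % 3 = 1 <;> simp [h, add_comm]

/-- `L_3(n)` equals the number of `1`s in the base-`3` expansion of `n`. -/
theorem stmt_12
    (f : ℕ → ℤ) (hf1 : f 1 = 1) (hfmul : ∀ m n, f (m * n) = f m * f n)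
    (hfp : f 3 = 1) (hfq : ∀ q : ℕ, q.Prime → q ≠ 3 → f q = legendreSym 3 q)
    (n : ℕ) :
    ∑ m ∈ Finset.Icc 1 n, f m = ((Nat.digits 3 n).count 1 : ℤ) := by
  have h3 : ∀ m, f (3 * m) = f m := fun m => by rw [hfmul, hfp, one_mul]
  exact sum_Icc_eq_count_digits_one f h3 (apply_eq_legendreSym_of_not_dvd f hf1 hfmul hfq) n
end

section
/- For all n ≥ 1, 0 ≤ L_3(n) ≤ ⌊log_3 n⌋ + 1. -/
/-!
On integers prime to `3`, `λ₃` is the character `(· / 3)`, and `λ₃ (3 k) = λ₃ k`. Hence the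
partial sums satisfy `L₃ n = L₃ (n / 3) + [n ≡ 1 mod 3]`: `L₃ n` counts the digits `1` in the
ternary expansion of `n`, a number between `0` and the number `⌊log₃ n⌋ + 1` of ternary digits.
-/

open Finset

theorem eq_legendreSym_of_not_dvd {p : ℕ} [Fact p.Prime] {f : ℕ → ℤ} (hf1 : f 1 = 1)
    (hfmul : ∀ m n, f (m * n) = f m * f n)
    (hfq : ∀ q : ℕ, q.Prime → q ≠ p → f q = legendreSym p q) :
    ∀ m : ℕ, ¬ p ∣ m → f m = legendreSym p m := by
  intro m
  induction m using Nat.recOnMul with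
  | zero => simp
  | one => simp [hf1, legendreSym.at_one]
  | prime q hq => exact fun hpq => hfq q hq (by rintro rfl; exact hpq dvd_rfl)
  | mul a b ha hb =>
    intro hpab
    rw [hfmul, ha (fun h => hpab (h.mul_right b)), hb (fun h => hpab (h.mul_left a)),
      Nat.cast_mul, legendreSym.mul]

theorem legendreSym_three_of_mod_eq_one {m : ℕ} (hm : m % 3 = 1) : legendreSym 3 m = 1 := by
  rw [legendreSym.mod, show (m : ℤ) % (3 : ℕ) = 1 by omega]
  decide

theorem legendreSym_three_of_mod_eq_two {m : ℕ} (hm : m % 3 = 2) : legendreSym 3 m = -1 := by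
  rw [legendreSym.mod, show (m : ℤ) % (3 : ℕ) = 2 by omega]
  decide

theorem sum_Icc_eq_sum_Icc_div_three_add {f : ℕ → ℤ} (h3 : ∀ k, f (3 * k) = f k)
    (hχ : ∀ m : ℕ, ¬ 3 ∣ m → f m = legendreSym 3 m) (n : ℕ) :
    ∑ m ∈ Icc 1 n, f m = ∑ k ∈ Icc 1 (n / 3), f k + if n % 3 = 1 then 1 else 0 := by
  induction n with
  | zero => simp
  | succ n ih =>
    rw [sum_Icc_succ_top (by omega), ih]
    rcases (by omega : (n + 1) % 3 = 0 ∨ (n + 1) % 3 = 1 ∨ (n + 1) % 3 = 2) with h | h | h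
    · have hf : f (n + 1) = f (n / 3 + 1) := by rw [show n + 1 = 3 * (n / 3 + 1) by omega, h3]
      rw [show (n + 1) / 3 = n / 3 + 1 by omega, sum_Icc_succ_top (by omega), hf,
        if_neg (show n % 3 ≠ 1 by omega), if_neg (show (n + 1) % 3 ≠ 1 by omega)]
      ring
    · rw [show (n + 1) / 3 = n / 3 by omega, hχ _ (by omega),
        legendreSym_three_of_mod_eq_one h, if_neg (show n % 3 ≠ 1 by omega), if_pos h]
      ring
    · rw [show (n + 1) / 3 = n / 3 by omega, hχ _ (by omega),
        legendreSym_three_of_mod_eq_two h, if_pos (show n % 3 = 1 by omega),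
        if_neg (show (n + 1) % 3 ≠ 1 by omega)]
      ring

theorem eq_count_digits_of_eq_div_add {b d : ℕ} (hb : 1 < b) {S : ℕ → ℤ} (h0 : S 0 = 0)
    (hS : ∀ n, S n = S (n / b) + if n % b = d then 1 else 0) (n : ℕ) :
    S n = (Nat.digits b n).count d := by
  induction n using Nat.strong_induction_on with
  | _ n ih =>
    rcases Nat.eq_zero_or_pos n with rfl | hn
    · simp [h0]
    · rw [hS, ih _ (Nat.div_lt_self hn hb), Nat.digits_def' hb hn, List.count_cons]
      simp

theorem count_digits_le_log_add_one {b : ℕ} (hb : 1 < b) (d n : ℕ) :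
    (Nat.digits b n).count d ≤ Nat.log b n + 1 := by
  rcases Nat.eq_zero_or_pos n with rfl | hn
  · simp
  · exact (List.count_le_length ..).trans (Nat.length_digits b n hb hn.ne').le

theorem stmt_13_general
    (f : ℕ → ℤ) (hf1 : f 1 = 1) (hfmul : ∀ m n, f (m * n) = f m * f n)
    (hfp : f 3 = 1) (hfq : ∀ q : ℕ, q.Prime → q ≠ 3 → f q = legendreSym 3 q)
    (n : ℕ) :
    0 ≤ ∑ m ∈ Finset.Icc 1 n, f m ∧
      ∑ m ∈ Finset.Icc 1 n, f m ≤ (Nat.log 3 n : ℤ) + 1 := by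
  have h3 (k : ℕ) : f (3 * k) = f k := by rw [hfmul, hfp, one_mul]
  have hcount : ∑ m ∈ Icc 1 n, f m = (Nat.digits 3 n).count 1 :=
    eq_count_digits_of_eq_div_add (by norm_num) (by simp)
      (sum_Icc_eq_sum_Icc_div_three_add h3 (eq_legendreSym_of_not_dvd hf1 hfmul hfq)) n
  rw [hcount]
  exact ⟨Nat.cast_nonneg _, by exact_mod_cast count_digits_le_log_add_one (by norm_num) 1 n⟩

/-- For all `n ≥ 1`, `0 ≤ L_3(n) ≤ ⌊log_3 n⌋ + 1`. -/
theorem stmt_13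
    (f : ℕ → ℤ) (hf1 : f 1 = 1) (hfmul : ∀ m n, f (m * n) = f m * f n)
    (hfp : f 3 = 1) (hfq : ∀ q : ℕ, q.Prime → q ≠ 3 → f q = legendreSym 3 q)
    (n : ℕ) (hn : 1 ≤ n) :
    0 ≤ ∑ m ∈ Finset.Icc 1 n, f m ∧
      ∑ m ∈ Finset.Icc 1 n, f m ≤ (Nat.log 3 n : ℤ) + 1 :=
  stmt_13_general f hf1 hfmul hfp hfq n
end

section
/- L_p(n) ≥ 0 for all n ∈ ℕ if and only if ∑_{m=1}^{k} (m/p) ≥ 0 for all 1 ≤ k ≤ p. -/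
/-!
Write `χ m = (m/p)` and `S n = ∑_{m ≤ n} χ m`. Since `λ_p` agrees with `χ` off the multiples of `p`
and `λ_p (p t) = λ_p t`, splitting `[1, n]` into multiples and non-multiples of `p` gives
`L_p n = S n + L_p ⌊n/p⌋`. If `S` is nonnegative on `[1, p]`, it is nonnegative everywhere by
periodicity (`S (n + p) = S n + S p`), and then `L_p n ≥ 0` by strong induction on `n`. Conversely,
for `k < p` the recursion reads `S k = L_p k`, and `S p = S (p - 1)` because `χ p = 0`.
-/

open Finset

section Periodic

variable {M : Type*} [AddCommMonoid M] {g : ℕ → M} {c : ℕ}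

theorem Function.Periodic.sum_Icc_add (hg : Function.Periodic g c) (n : ℕ) :
    ∑ m ∈ Icc 1 (n + c), g m = ∑ m ∈ Icc 1 n, g m + ∑ m ∈ Icc 1 c, g m := by
  induction n with
  | zero => simp
  | succ n ih =>
    rw [show n + 1 + c = n + c + 1 by omega, sum_Icc_succ_top (by omega), ih,
      sum_Icc_succ_top (by omega), show n + c + 1 = n + 1 + c by omega, hg]
    abel

theorem Function.Periodic.sum_Icc_nonneg [PartialOrder M] [IsOrderedAddMonoid M]
    (hg : Function.Periodic g c) (hc : 0 < c) (h : ∀ k, 1 ≤ k → k ≤ c → 0 ≤ ∑ m ∈ Icc 1 k, g m) (n : ℕ) :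
    0 ≤ ∑ m ∈ Icc 1 n, g m := by
  induction n using Nat.strong_induction_on with
  | _ n ih =>
    rcases Nat.eq_zero_or_pos n with rfl | hn
    · simp
    rcases le_or_gt n c with hnc | hcn
    · exact h n hn hnc
    · obtain ⟨r, rfl⟩ : ∃ r, n = r + c := ⟨n - c, by omega⟩
      rw [hg.sum_Icc_add]
      exact add_nonneg (ih r (by omega)) (h c (by omega) le_rfl)

end Periodic

section Legendre

variable (p : ℕ) [Fact p.Prime]

theorem legendreSym_natCast_periodic : Function.Periodic (fun m : ℕ => legendreSym p m) p := by
  intro m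
  simp [legendreSym]

theorem legendreSym_natCast_of_dvd {m : ℕ} (hm : p ∣ m) : legendreSym p m = 0 :=
  (legendreSym.eq_zero_iff p m).mpr (by exact_mod_cast (ZMod.natCast_eq_zero_iff m p).mpr hm)

variable {p} {f : ℕ → ℤ} (hf1 : f 1 = 1) (hfmul : ∀ m n, f (m * n) = f m * f n)
  (hfq : ∀ q : ℕ, q.Prime → q ≠ p → f q = legendreSym p q)
include hf1 hfmul hfq

theorem eq_legendreSym_of_not_dvd_s15 {m : ℕ} (hm : ¬ p ∣ m) : f m = legendreSym p m := by
  induction m using Nat.recOnMul with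
  | zero => exact absurd (dvd_zero p) hm
  | one => simp [hf1]
  | prime q hq => exact hfq q hq fun hqp => hm (hqp ▸ dvd_rfl)
  | mul a b iha ihb =>
    rw [hfmul, iha fun h => hm (h.mul_right b), ihb fun h => hm (h.mul_left a), Nat.cast_mul,
      legendreSym.mul]

theorem sum_Icc_eq_sum_legendreSym_add_sum_Icc_div (hfp : f p = 1) (n : ℕ) :
    ∑ m ∈ Icc 1 n, f m = ∑ m ∈ Icc 1 n, legendreSym p m + ∑ t ∈ Icc 1 (n / p), f t := by
  induction n with
  | zero => simp
  | succ n ih =>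
    rw [sum_Icc_succ_top (by omega), sum_Icc_succ_top (by omega), ih, Nat.succ_div]
    by_cases hdvd : p ∣ n + 1
    · obtain ⟨t, ht⟩ := hdvd
      have ht_eq : t = n / p + 1 := by
        have hp := (Fact.out : p.Prime).pos
        rw [← Nat.mul_div_cancel_left t hp, ← ht, Nat.succ_div, if_pos ⟨t, ht⟩]
      rw [if_pos ⟨t, ht⟩, sum_Icc_succ_top (Nat.le_add_left 1 (n / p)),
        legendreSym_natCast_of_dvd p ⟨t, ht⟩, ht, hfmul, hfp, one_mul, ← ht_eq]
      ring
    · rw [if_neg hdvd, add_zero, eq_legendreSym_of_not_dvd_s15 hf1 hfmul hfq hdvd]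
      ring

end Legendre

theorem stmt_15_general (p : ℕ) [Fact p.Prime]
    (f : ℕ → ℤ) (hf1 : f 1 = 1) (hfmul : ∀ m n, f (m * n) = f m * f n)
    (hfp : f p = 1) (hfq : ∀ q : ℕ, q.Prime → q ≠ p → f q = legendreSym p q) :
    (∀ n : ℕ, 0 ≤ ∑ m ∈ Finset.Icc 1 n, f m) ↔
      (∀ k : ℕ, 1 ≤ k → k ≤ p → 0 ≤ ∑ m ∈ Finset.Icc 1 k, legendreSym p m) := by
  have hp := (Fact.out : p.Prime).one_lt
  have hrec := sum_Icc_eq_sum_legendreSym_add_sum_Icc_div hf1 hfmul hfq hfp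
  constructor
  · intro hL k hk hkp
    have hS_lt : ∀ j < p, ∑ m ∈ Icc 1 j, legendreSym p m = ∑ m ∈ Icc 1 j, f m := fun j hj => by
      simp [hrec j, Nat.div_eq_of_lt hj]
    rcases hkp.lt_or_eq with hkp | rfl
    · exact hS_lt k hkp ▸ hL k
    · obtain ⟨j, rfl⟩ : ∃ j, k = j + 1 := ⟨k - 1, by omega⟩
      rw [sum_Icc_succ_top (by omega), legendreSym_natCast_of_dvd _ dvd_rfl, add_zero,
        hS_lt j (by omega)]
      exact hL j
  · intro hS n
    induction n using Nat.strong_induction_on with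
    | _ n ih =>
      rcases Nat.eq_zero_or_pos n with rfl | hn
      · simp
      rw [hrec n]
      exact add_nonneg ((legendreSym_natCast_periodic p).sum_Icc_nonneg (by omega) hS n)
        (ih (n / p) (Nat.div_lt_self hn hp))

/-- `L_p(n) ≥ 0` for all `n` iff the partial sums of Legendre symbols
`∑_{m=1}^{k} (m/p)` are nonnegative for all `1 ≤ k ≤ p`. -/
theorem stmt_15 (p : ℕ) [Fact p.Prime] (hodd : p ≠ 2)
    (f : ℕ → ℤ) (hf1 : f 1 = 1) (hfmul : ∀ m n, f (m * n) = f m * f n)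
    (hfp : f p = 1) (hfq : ∀ q : ℕ, q.Prime → q ≠ p → f q = legendreSym p q) :
    (∀ n : ℕ, 0 ≤ ∑ m ∈ Finset.Icc 1 n, f m) ↔
      (∀ k : ℕ, 1 ≤ k → k ≤ p → 0 ≤ ∑ m ∈ Finset.Icc 1 k, legendreSym p m) :=
  stmt_15_general p f hf1 hfmul hfp hfq
end
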